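/- Let 0 ≤ ε < 2 and let (ξ, η) : ℝ → ℝ² be a differentiable solution of the reduced Pikovsky–Topaj system. Then the function t ↦ (π − ξ(t − π), π + η(t − π)) is also a solution of the same system. In other words, the system is invariant under the coordinate change σ : (ξ, η) ↦ (π − ξ, π + η) combined with the time shift t ↦ t + π (the time-shift symmetry). -/

import Mathlib

open Real

/-! Write `(F, G)(t, ξ, η)` for the right-hand side. Replacing `η` by `π + η` turns `t - η` into
`(t - π) - η` and flips the signs of `sin η` and `cos η`; replacing `ξ` by `π - ξ` keeps `sin ξ` and
flips `cos ξ`. Hence `F(t, π - ξ, π + η) = -F(t - π, ξ, η)` and `G(t, π - ξ, π + η) = G(t - π, ξ, η)`,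
and the chain rule for `t ↦ (π - ξ(t - π), π + η(t - π))` produces exactly these signs. -/

/-- `(ξ, η)` is a solution of the reduced (nonautonomous) Pikovsky–Topaj system
`ξ' = 2ε sin ξ sin η / (2 + ε cos(t − η))`,
`η' = (1 − ε cos(t − η) − 2ε cos ξ cos η) / (2 + ε cos(t − η))`. -/
def IsReducedPTSol (ε : ℝ) (ξ η : ℝ → ℝ) : Prop :=
  ∀ t : ℝ,
    HasDerivAt ξ
      (2 * ε * Real.sin (ξ t) * Real.sin (η t) / (2 + ε * Real.cos (t - η t))) t ∧
    HasDerivAt η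
      ((1 - ε * Real.cos (t - η t) - 2 * ε * Real.cos (ξ t) * Real.cos (η t)) /
        (2 + ε * Real.cos (t - η t))) t

namespace ReducedPT

noncomputable def fieldξ (ε t x y : ℝ) : ℝ :=
  2 * ε * sin x * sin y / (2 + ε * cos (t - y))

noncomputable def fieldη (ε t x y : ℝ) : ℝ :=
  (1 - ε * cos (t - y) - 2 * ε * cos x * cos y) / (2 + ε * cos (t - y))

theorem isReducedPTSol_iff {ε : ℝ} {ξ η : ℝ → ℝ} :
    IsReducedPTSol ε ξ η ↔ ∀ t, HasDerivAt ξ (fieldξ ε t (ξ t) (η t)) t ∧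
      HasDerivAt η (fieldη ε t (ξ t) (η t)) t :=
  Iff.rfl

theorem fieldξ_pi_sub_pi_add (ε t x y : ℝ) :
    fieldξ ε t (π - x) (π + y) = -fieldξ ε (t - π) x y := by
  rw [fieldξ, fieldξ, sub_add_eq_sub_sub, sin_pi_sub, add_comm π y, sin_add_pi]
  ring

theorem fieldη_pi_sub_pi_add (ε t x y : ℝ) :
    fieldη ε t (π - x) (π + y) = fieldη ε (t - π) x y := by
  rw [fieldη, fieldη, sub_add_eq_sub_sub, cos_pi_sub, add_comm π y, cos_add_pi]
  ring

end ReducedPT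

theorem reducedPT_timeShiftSymmetry_general (ε : ℝ) (ξ η : ℝ → ℝ)
    (h : IsReducedPTSol ε ξ η) :
    IsReducedPTSol ε (fun t => Real.pi - ξ (t - Real.pi))
      (fun t => Real.pi + η (t - Real.pi)) := by
  rw [ReducedPT.isReducedPTSol_iff] at h ⊢
  intro t
  obtain ⟨hξ, hη⟩ := h (t - π)
  constructor
  · rw [ReducedPT.fieldξ_pi_sub_pi_add]
    exact (hξ.comp_sub_const t π).const_sub π
  · rw [ReducedPT.fieldη_pi_sub_pi_add]
    exact (hη.comp_sub_const t π).const_add π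

/-- The reduced Pikovsky–Topaj system is invariant under the coordinate change
`σ : (ξ, η) ↦ (π − ξ, π + η)` combined with the time shift `t ↦ t + π`. -/
theorem reducedPT_timeShiftSymmetry (ε : ℝ) (hε₀ : 0 ≤ ε) (hε₂ : ε < 2) (ξ η : ℝ → ℝ)
    (h : IsReducedPTSol ε ξ η) :
    IsReducedPTSol ε (fun t => Real.pi - ξ (t - Real.pi))
      (fun t => Real.pi + η (t - Real.pi)) :=
  reducedPT_timeShiftSymmetry_general ε ξ η h
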